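/- Every derivation of the incidence algebra I(X,R) of a locally finite preordered set is fully determined by its values on the finite-support subalgebra Ĩ(X,R): if two derivations of I(X,R) agree on all standard basis elements e_{xy}, then they are equal. -/
import Mathlib


open Finset

/-- The standard basis element `e_{xy}` of the incidence algebra:
`e_{xy}(u,v) = 1` if `(u,v) = (x,y)` (and `x ≤ y`), and `0` otherwise. -/
def e (R : Type*) [CommRing R] {X : Type*} [Preorder X] [DecidableEq X]
    [DecidableRel (α := X) (· ≤ ·)] (x y : X) : IncidenceAlgebra R X :=
  ⟨fun u v => if u = x ∧ v = y ∧ x ≤ y then 1 else 0, fun u v huv => by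
    simp only [ite_eq_right_iff, and_imp]
    rintro rfl rfl h
    exact absurd h huv⟩

set_option linter.unusedSectionVars false

section Aux
variable {R X : Type*} [CommRing R] [Preorder X] [DecidableEq X]
    [DecidableRel (α := X) (· ≤ ·)] [LocallyFiniteOrder X]

lemma e_apply (x y u v : X) :
    e R x y u v = if u = x ∧ v = y ∧ x ≤ y then 1 else 0 := rfl

lemma exx_mul_apply (f : IncidenceAlgebra R X) (x u v : X) :
    (e R x x * f) u v = if u = x then f x v else 0 := by
  rw [IncidenceAlgebra.mul_apply]
  by_cases hu : u = x
  · subst hu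
    by_cases hv : u ≤ v
    · rw [if_pos rfl, Finset.sum_eq_single u]
      · simp [e_apply]
      · intro t ht htne
        simp [e_apply, htne]
      · intro habs
        exact absurd (Finset.mem_Icc.2 ⟨le_refl u, hv⟩) habs
    · rw [if_pos rfl, IncidenceAlgebra.apply_eq_zero_of_not_le hv,
        Finset.sum_eq_zero]
      intro t ht
      exact absurd (le_trans (Finset.mem_Icc.1 ht).1 (Finset.mem_Icc.1 ht).2) hv
  · rw [if_neg hu, Finset.sum_eq_zero]
    intro t ht
    simp [e_apply, hu]

lemma mul_eyy_apply (f : IncidenceAlgebra R X) (y u v : X) :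
    (f * e R y y) u v = if v = y then f u y else 0 := by
  rw [IncidenceAlgebra.mul_apply]
  by_cases hv : v = y
  · subst hv
    by_cases hu : u ≤ v
    · rw [if_pos rfl, Finset.sum_eq_single v]
      · simp [e_apply]
      · intro t ht htne
        simp [e_apply, htne]
      · intro habs
        exact absurd (Finset.mem_Icc.2 ⟨hu, le_refl v⟩) habs
    · rw [if_pos rfl, IncidenceAlgebra.apply_eq_zero_of_not_le hu,
        Finset.sum_eq_zero]
      intro t ht
      exact absurd (le_trans (Finset.mem_Icc.1 ht).1 (Finset.mem_Icc.1 ht).2) hu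
  · rw [if_neg hv, Finset.sum_eq_zero]
    intro t ht
    simp [e_apply, hv]

lemma triple (f : IncidenceAlgebra R X) (x y : X) :
    e R x x * f * e R y y = f x y • e R x y := by
  ext u v _
  rw [mul_eyy_apply, IncidenceAlgebra.constSMul_apply, e_apply, smul_eq_mul]
  by_cases hv : v = y
  · subst hv
    rw [exx_mul_apply]
    by_cases hu : u = x
    · subst hu
      by_cases hxy : u ≤ v
      · simp [hxy]
      · simp [hxy, IncidenceAlgebra.apply_eq_zero_of_not_le hxy f]
    · simp [hu]
  · simp [hv]

end Aux

/-- Every derivation of the incidence algebra `I(X,R)` of a locally finite preordered set is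
fully determined by its values on the finite-support subalgebra `Ĩ(X,R)`: if two derivations
agree on all standard basis elements `e_{xy}`, then they are equal. -/
theorem derivation_ext_on_e {R X : Type*} [CommRing R] [Preorder X]
    [DecidableEq X] [DecidableRel (α := X) (· ≤ ·)] [LocallyFiniteOrder X]
    (D₁ D₂ : IncidenceAlgebra R X →ₗ[R] IncidenceAlgebra R X)
    (hD₁ : ∀ f g : IncidenceAlgebra R X, D₁ (f * g) = D₁ f * g + f * D₁ g)
    (hD₂ : ∀ f g : IncidenceAlgebra R X, D₂ (f * g) = D₂ f * g + f * D₂ g)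
    (h : ∀ x y : X, D₁ (e R x y) = D₂ (e R x y)) :
    D₁ = D₂ := by
  apply LinearMap.ext
  intro f
  ext x y hxy
  have key : D₁ (e R x x * f * e R y y) = D₂ (e R x x * f * e R y y) := by
    rw [triple, map_smul, map_smul, h]
  rw [hD₁, hD₁, hD₂, hD₂, h, h] at key
  have key2 : e R x x * D₁ f * e R y y = e R x x * D₂ f * e R y y := by
    have k := add_right_cancel key
    rw [add_mul, add_mul] at k
    exact add_left_cancel k
  rw [triple, triple] at key2
  have h3 := congrArg (fun g : IncidenceAlgebra R X => g x y) key2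
  simpa [IncidenceAlgebra.constSMul_apply, e_apply, hxy] using h3
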